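/- arXiv:1607.05307 — 6 statements merged into one kernel-verified Lean document; each statement's English description precedes it below -/
import Mathlib

section
/- Let k ≥ 4 be an integer, b a nonzero complex number, and x₀, …, x_k complex numbers. Set Q(λ) = x_kλ^k + x_{k−1}λ^{k−1} + ⋯ + x₁λ + x₀. Then there exist polynomials τ ∈ ℂ[λ] and σ ∈ ℂ[μ] such that σ(λ⁻¹) = λ^{k−2}τ(λ) + bλ⁻¹Q(λ) for all λ ∈ ℂ∖{0} if and only if x₂ = x₃ = ⋯ = x_{k−2} = 0. -/
open Finset in
/-- For `k ≥ 4`, `b ≠ 0` and `Q(λ) = x_k λ^k + ⋯ + x₁ λ + x₀`, there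
exist polynomials `τ ∈ ℂ[λ]` and `σ ∈ ℂ[μ]` with
`σ(λ⁻¹) = λ^{k−2} τ(λ) + b λ⁻¹ Q(λ)` for all `λ ≠ 0` if and only if
`x₂ = x₃ = ⋯ = x_{k−2} = 0`. -/
theorem stmt_1 (k : ℕ) (hk : 4 ≤ k) (b : ℂ) (hb : b ≠ 0) (x : ℕ → ℂ) :
    (∃ τ σ : Polynomial ℂ, ∀ l : ℂ, l ≠ 0 →
        σ.eval l⁻¹ = l ^ (k - 2) * τ.eval l
          + b * l⁻¹ * ∑ i ∈ Finset.range (k + 1), x i * l ^ i)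
    ↔ (∀ i : ℕ, 2 ≤ i → i ≤ k - 2 → x i = 0) := by
  open Polynomial in
  constructor
  · rintro ⟨τ, σ, h⟩ i hi2 hik
    set n := σ.natDegree with hn
    set N := n + 1 with hN
    set Q : Polynomial ℂ := ∑ j ∈ range (k+1), C (x j) * X^j with hQ
    have hQeval : ∀ l : ℂ, Q.eval l = ∑ j ∈ range (k+1), x j * l ^ j := by
      intro l; simp [hQ, eval_finset_sum]
    set P1 : Polynomial ℂ := ∑ j ∈ range (n+1), C (σ.coeff j) * X^(N-j) with hP1
    set P2 : Polynomial ℂ := τ * X^(N+k-2) + C b * Q * X^(N-1) with hP2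
    have key : P1 = P2 := by
      apply Polynomial.eq_of_infinite_eval_eq
      refine Set.Infinite.mono ?_ ((Set.finite_singleton (0:ℂ)).infinite_compl)
      intro l hl
      have hl0 : l ≠ 0 := hl
      have h1 : P1.eval l = l ^ N * σ.eval l⁻¹ := by
        rw [hP1, Polynomial.eval_finset_sum, Polynomial.eval_eq_sum_range,
          Finset.mul_sum]
        apply Finset.sum_congr rfl
        intro j hj
        have hjN : j ≤ N := by
          simp only [Finset.mem_range] at hj; omega
        rw [Polynomial.eval_mul, Polynomial.eval_C, Polynomial.eval_pow,
          Polynomial.eval_X, pow_sub₀ l hl0 hjN, ← inv_pow]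
        ring
      have h2 : P2.eval l = l ^ N * σ.eval l⁻¹ := by
        rw [h l hl0, hP2]
        simp only [Polynomial.eval_add, Polynomial.eval_mul, Polynomial.eval_pow,
          Polynomial.eval_X, Polynomial.eval_C, hQeval]
        have e1 : l ^ N * l ^ (k-2) = l ^ (N+k-2) := by
          rw [← pow_add]; congr 1; omega
        have e2 : l ^ N * l⁻¹ = l ^ (N-1) := by
          have h' : l ^ N = l ^ (N-1) * l := by rw [← pow_succ, Nat.sub_add_cancel (by omega)]
          rw [h', mul_assoc, mul_inv_cancel₀ hl0, mul_one]
        rw [← e1, ← e2]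
        ring
      rw [Set.mem_setOf_eq, h1, h2]
    have hc := congrArg (fun p => p.coeff (n + i)) key
    simp only [hP1, hP2, Polynomial.finset_sum_coeff, Polynomial.coeff_add,
      Polynomial.coeff_C_mul, Polynomial.coeff_mul_X_pow'] at hc
    have hL : (∑ j ∈ range (n+1),
        if N - j ≤ n + i then (C (σ.coeff j)).coeff (n + i - (N - j)) else 0) = 0 := by
      apply Finset.sum_eq_zero
      intro j hj
      rw [if_pos (by omega)]
      have : n + i - (N - j) ≠ 0 := by omega
      simp [Polynomial.coeff_C, this]
    rw [hL] at hc
    have hne : ¬ (N + k - 2 ≤ n + i) := by omega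
    rw [if_neg hne] at hc
    have hle : N - 1 ≤ n + i := by omega
    rw [if_pos hle] at hc
    have hni : n + i - (N - 1) = i := by omega
    rw [hni] at hc
    have hQc : Q.coeff i = x i := by
      rw [hQ, Polynomial.finset_sum_coeff]
      rw [Finset.sum_eq_single i]
      · simp
      · intro j _ hji
        have : i ≠ j := Ne.symm hji
        simp [Polynomial.coeff_X_pow, this]
      · intro habs
        exact absurd (Finset.mem_range.mpr (by omega)) habs
    rw [hQc] at hc
    have : b * x i = 0 := by simpa using hc.symm
    rcases mul_eq_zero.mp this with h' | h'
    · exact absurd h' hb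
    · exact h'
  · intro hx
    obtain ⟨m, rfl⟩ := Nat.exists_eq_add_of_le hk
    refine ⟨-(C (b * x (3 + m))) - C (b * x (4 + m)) * X,
      C (b * x 1) + C (b * x 0) * X, ?_⟩
    intro l hl
    have hsum : ∑ i ∈ range (4 + m + 1), x i * l ^ i
        = x 0 + x 1 * l + x (3 + m) * l ^ (3 + m) + x (4 + m) * l ^ (4 + m) := by
      rw [← Finset.sum_subset (s₁ := ({0, 1, 3 + m, 4 + m} : Finset ℕ))
        (by intro j hj; simp only [Finset.mem_insert, Finset.mem_singleton] at hj
            rcases hj with rfl | rfl | rfl | rfl <;> simp [Finset.mem_range] <;> omega)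
        (by intro j hj hj2
            simp only [Finset.mem_insert, Finset.mem_singleton, not_or] at hj2
            simp only [Finset.mem_range] at hj
            have : x j = 0 := hx j (by omega) (by omega)
            simp [this])]
      rw [Finset.sum_insert (by simp only [Finset.mem_insert, Finset.mem_singleton]; omega),
        Finset.sum_insert (by simp only [Finset.mem_insert, Finset.mem_singleton]; omega),
        Finset.sum_insert (by simp only [Finset.mem_singleton]; omega), Finset.sum_singleton]
      ring
    rw [hsum]
    have h2 : 4 + m - 2 = 2 + m := by omega
    rw [h2]
    simp only [Polynomial.eval_add, Polynomial.eval_sub, Polynomial.eval_neg,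
      Polynomial.eval_mul, Polynomial.eval_C, Polynomial.eval_X]
    have e3 : l ^ (3 + m) = l ^ (2 + m) * l := by rw [← pow_succ]; congr 1; omega
    have e4 : l ^ (4 + m) = l ^ (2 + m) * l * l := by
      rw [← pow_succ, ← pow_succ]; congr 1; omega
    rw [e3, e4]
    field_simp
    ring
end

section
/- Let k ≥ 4 be an integer, a a nonzero complex number, and x₀, …, x_k complex numbers. Set Q(λ) = x_kλ^k + ⋯ + x₁λ + x₀. Then there exist polynomials τ ∈ ℂ[λ] and σ ∈ ℂ[μ] such that σ(λ⁻¹) = λ^{k−2}τ(λ) + aλ⁻²Q(λ)² for all λ ∈ ℂ∖{0} if and only if the k−3 quadratic conditions Σ_{i+j=n, 0≤i,j≤k} x_i x_j = 0 hold for every n with 3 ≤ n ≤ k−1 (equivalently x₀x₃ + x₁x₂ = 0, x₀x₄ + x₁x₃ + x₂²/2 = 0, …, up to n = k−1). -/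
/-!
Write `R = a Q²`. Multiplying `σ(λ⁻¹) = λ^m τ(λ) + λ⁻² R(λ)` by `λ^(deg σ + 2)` turns it into an
identity of polynomials in which the left side has no monomials of degree above `deg σ + 2` and
`λ^m τ` none below `m + deg σ + 2`, so the coefficients of `R` in degrees `3, …, m + 1` must
vanish. Conversely, if they vanish, `R` splits as its part of degree `≤ 2`, which is `λ²` times
a polynomial in `λ⁻¹`, plus `λ^(m+2)` times a polynomial in `λ`. With `m = k - 2`, the
coefficient of `λⁿ` in `Q²` for `n ≤ k` is `Σ_{i+j=n} x_i x_j`.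
-/

open Polynomial Finset

namespace Polynomial

section CommSemiring

variable {R : Type*} [CommSemiring R]

theorem coeff_sum_range_C_mul_X_pow (x : ℕ → R) (N n : ℕ) :
    (∑ i ∈ range N, C (x i) * X ^ i).coeff n = if n < N then x n else 0 := by
  simp [finsetSum_coeff]

theorem coeff_sq_sum_range_C_mul_X_pow (x : ℕ → R) {N n : ℕ} (hn : n < N) :
    ((∑ i ∈ range N, C (x i) * X ^ i) ^ 2).coeff n = ∑ i ∈ range (n + 1), x i * x (n - i) := by
  rw [sq, coeff_mul, Nat.sum_antidiagonal_eq_sum_range_succ_mk]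
  refine sum_congr rfl fun i hi => ?_
  have hin := mem_range.1 hi
  simp only [coeff_sum_range_C_mul_X_pow, if_pos (show i < N by omega),
    if_pos (show n - i < N by omega)]

end CommSemiring

variable {K : Type*} [Field K]

theorem eval_reflect {f : K[X]} {N : ℕ} (hf : f.natDegree ≤ N) {l : K} (hl : l ≠ 0) :
    (reflect N f).eval l = l ^ N * f.eval l⁻¹ := by
  let := invertibleOfNonzero (inv_ne_zero hl)
  have h := eval₂_reflect_mul_pow (RingHom.id K) l⁻¹ N f hf
  rw [invOf_eq_inv, inv_inv] at h
  rw [← eval₂_id, ← eval₂_id, ← h, mul_left_comm, ← mul_pow, mul_inv_cancel₀ hl, one_pow,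
    mul_one]

theorem coeff_eq_zero_of_eval_inv_eq [Infinite K] {σ τ R : K[X]} {m : ℕ}
    (h : ∀ l : K, l ≠ 0 → σ.eval l⁻¹ = l ^ m * τ.eval l + l⁻¹ ^ 2 * R.eval l)
    {n : ℕ} (hn : 2 < n) (hnm : n < m + 2) : R.coeff n = 0 := by
  set d := σ.natDegree
  have hcleared : X ^ 2 * reflect d σ = X ^ (m + d + 2) * τ + X ^ d * R := by
    refine eq_of_infinite_eval_eq _ _ <|
      (Set.finite_singleton (0 : K)).infinite_compl.mono fun l (hl : l ≠ 0) => ?_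
    rw [Set.mem_ofPred_eq, eval_mul, eval_reflect le_rfl hl, h l hl]
    simp only [eval_mul, eval_add, eval_pow, eval_X]
    field_simp
    ring
  have hcoeff := congr_arg (coeff · (n + d)) hcleared
  simp only [coeff_X_pow_mul', coeff_add, coeff_reflect] at hcoeff
  rwa [if_pos (by omega), revAt_eq_self_of_lt (by omega),
    coeff_eq_zero_of_natDegree_lt (by omega), if_neg (by omega), if_pos (by omega),
    Nat.add_sub_cancel, zero_add, eq_comm] at hcoeff

theorem exists_eval_inv_eq_of_coeff_eq_zero {R : K[X]} {m : ℕ}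
    (h : ∀ n, 2 < n → n < m + 2 → R.coeff n = 0) :
    ∃ τ σ : K[X], ∀ l : K, l ≠ 0 → σ.eval l⁻¹ = l ^ m * τ.eval l + l⁻¹ ^ 2 * R.eval l := by
  set L : K[X] := C (R.coeff 2) * X ^ 2 + C (R.coeff 1) * X + C (R.coeff 0)
  obtain ⟨T, hT⟩ : X ^ (m + 2) ∣ R - L := X_pow_dvd_iff.2 fun n hn => by
    rcases lt_or_ge 2 n with h2 | h2
    · simp [L, h n h2 hn, coeff_C, coeff_X, show n ≠ 0 by omega, show 1 ≠ n by omega,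
        show n ≠ 2 by omega]
    · interval_cases n <;> simp [L]
  refine ⟨-T, reflect 2 L, fun l hl => ?_⟩
  have hTl := congr_arg (eval l) hT
  simp only [eval_sub, eval_mul, eval_pow, eval_X] at hTl
  rw [eval_reflect natDegree_quadratic_le (inv_ne_zero hl), inv_inv, eval_neg]
  have hcancel : l⁻¹ ^ 2 * l ^ (m + 2) = l ^ m := by
    rw [pow_add, mul_left_comm, ← mul_pow, inv_mul_cancel₀ hl, one_pow, mul_one]
  linear_combination (-l⁻¹ ^ 2) * hTl - T.eval l * hcancel

theorem exists_eval_inv_eq_iff_coeff_eq_zero [Infinite K] {R : K[X]} {m : ℕ} :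
    (∃ τ σ : K[X], ∀ l : K, l ≠ 0 → σ.eval l⁻¹ = l ^ m * τ.eval l + l⁻¹ ^ 2 * R.eval l) ↔
      ∀ n, 2 < n → n < m + 2 → R.coeff n = 0 :=
  ⟨fun ⟨_, _, h⟩ _ => coeff_eq_zero_of_eval_inv_eq h, exists_eval_inv_eq_of_coeff_eq_zero⟩

end Polynomial

open Finset in
/-- For `k ≥ 4`, `a ≠ 0` and `Q(λ) = x_k λ^k + ⋯ + x₁ λ + x₀`, there
exist polynomials `τ ∈ ℂ[λ]` and `σ ∈ ℂ[μ]` with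
`σ(λ⁻¹) = λ^{k−2} τ(λ) + a λ⁻² Q(λ)²` for all `λ ≠ 0` if and only if the `k−3`
quadratic conditions `Σ_{i+j=n} x_i x_j = 0` hold for all `3 ≤ n ≤ k−1`. -/
theorem stmt_2 (k : ℕ) (hk : 4 ≤ k) (a : ℂ) (ha : a ≠ 0) (x : ℕ → ℂ) :
    (∃ τ σ : Polynomial ℂ, ∀ l : ℂ, l ≠ 0 →
        σ.eval l⁻¹ = l ^ (k - 2) * τ.eval l
          + a * l⁻¹ ^ 2 * (∑ i ∈ Finset.range (k + 1), x i * l ^ i) ^ 2)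
    ↔ (∀ n : ℕ, 3 ≤ n → n ≤ k - 1 →
        ∑ i ∈ Finset.range (n + 1), x i * x (n - i) = 0) := by
  set Q : ℂ[X] := ∑ i ∈ range (k + 1), C (x i) * X ^ i
  have heval (l : ℂ) :
      a * l⁻¹ ^ 2 * (∑ i ∈ range (k + 1), x i * l ^ i) ^ 2 = l⁻¹ ^ 2 * (C a * Q ^ 2).eval l := by
    simp only [Q, eval_mul, eval_C, eval_pow, eval_finsetSum, eval_X]
    ring
  have hcoeff {n : ℕ} (hn : n < k + 1) :
      (C a * Q ^ 2).coeff n = a * ∑ i ∈ range (n + 1), x i * x (n - i) := by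
    rw [coeff_C_mul, coeff_sq_sum_range_C_mul_X_pow x hn]
  simp_rw [heval, exists_eval_inv_eq_iff_coeff_eq_zero]
  refine forall_congr' fun n => ⟨fun h hn3 hnk => ?_, fun h hn2 hnk => ?_⟩
  · simpa [hcoeff (n := n) (by omega), ha] using h (by omega) (by omega)
  · rw [hcoeff (by omega), h (by omega) (by omega), mul_zero]
end

section
/- Let V : {(X, Y, Z) ∈ ℝ³ : X + Y > 0} → ℝ be given by V(X, Y, Z) = (X² − Y² − 3Z²)/(X + Y)^{5/2}. Then V satisfies the wave equation ∂²V/∂X² − ∂²V/∂Y² − ∂²V/∂Z² = 0 at every point with X + Y > 0. -/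
/-!
For `f x = (x² − c) (x + a)^p` one has
`f'' = 2 (x + a)^p + 4 p x (x + a)^(p-1) + p (p-1) (x² − c) (x + a)^(p-2)`.
With `s = X + Y` and `p = -5/2`, the last terms cancel in `V_XX − V_YY`, because as a function of `Y`
the numerator of `V` is minus one of the form `Y² − c`; the middle terms add up to
`−10 (X + Y) s^(-7/2) = −10 s^(-5/2)`, which balances `2 s^(-5/2) + 2 s^(-5/2) − V_ZZ = 10 s^(-5/2)`.
-/

open Filter Topology

theorem iteratedDeriv_two_eq_of_eventually_hasDerivAt {𝕜 F : Type*} [NontriviallyNormedField 𝕜]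
    [NormedAddCommGroup F] [NormedSpace 𝕜 F] {f f' : 𝕜 → F} {f'' : F} {x : 𝕜}
    (hf : ∀ᶠ y in 𝓝 x, HasDerivAt f (f' y) y) (hf' : HasDerivAt f' f'' x) :
    iteratedDeriv 2 f x = f'' := by
  have hderiv : deriv f =ᶠ[𝓝 x] f' := hf.mono fun _ hy => hy.deriv
  rw [iteratedDeriv_succ, iteratedDeriv_one, hderiv.deriv_eq, hf'.deriv]

theorem div_rpow_eventuallyEq_mul_rpow_neg {f g : ℝ → ℝ} {x : ℝ} (hgx : 0 < g x)
    (hg : ContinuousAt g x) (q : ℝ) :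
    (fun y => f y / g y ^ q) =ᶠ[𝓝 x] fun y => f y * g y ^ (-q) := by
  filter_upwards [hg.eventually (eventually_gt_nhds hgx)] with y hy
  rw [div_eq_mul_inv, Real.rpow_neg hy.le]

theorem hasDerivAt_add_const_rpow {a x : ℝ} (hx : 0 < x + a) (p : ℝ) :
    HasDerivAt (fun x => (x + a) ^ p) (p * (x + a) ^ (p - 1)) x := by
  simpa using ((hasDerivAt_id x).add_const a).rpow_const (p := p) (Or.inl hx.ne')

theorem iteratedDeriv_two_sq_sub_mul_add_rpow (c a p : ℝ) {x : ℝ} (hx : 0 < x + a) :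
    iteratedDeriv 2 (fun x => (x ^ 2 - c) * (x + a) ^ p) x =
      2 * (x + a) ^ p + 4 * p * x * (x + a) ^ (p - 1)
        + p * (p - 1) * (x ^ 2 - c) * (x + a) ^ (p - 2) := by
  have hsq : ∀ y : ℝ, HasDerivAt (fun x => x ^ 2 - c) (2 * y) y := fun y => by
    simpa using (hasDerivAt_pow 2 y).sub_const c
  have hfirst : ∀ᶠ y in 𝓝 x, HasDerivAt (fun x => (x ^ 2 - c) * (x + a) ^ p)
      (2 * y * (y + a) ^ p + (y ^ 2 - c) * (p * (y + a) ^ (p - 1))) y := by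
    filter_upwards [(continuous_add_const a).continuousAt.eventually (eventually_gt_nhds hx)]
      with y hy
    exact (hsq y).fun_mul (hasDerivAt_add_const_rpow hy p)
  refine iteratedDeriv_two_eq_of_eventually_hasDerivAt hfirst ?_
  have hsecond := (((hasDerivAt_id' x).const_mul 2).fun_mul (hasDerivAt_add_const_rpow hx p)).fun_add
    ((hsq x).fun_mul ((hasDerivAt_add_const_rpow hx (p - 1)).const_mul p))
  convert hsecond using 1
  rw [sub_sub, one_add_one_eq_two]
  ring

theorem iteratedDeriv_two_sq_sub_div_add_rpow (c a q : ℝ) {x : ℝ} (hx : 0 < x + a) :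
    iteratedDeriv 2 (fun x => (x ^ 2 - c) / (x + a) ^ q) x =
      2 * (x + a) ^ (-q) - 4 * q * x * (x + a) ^ (-q - 1)
        + q * (q + 1) * (x ^ 2 - c) * (x + a) ^ (-q - 2) := by
  have hmul := div_rpow_eventuallyEq_mul_rpow_neg (f := fun y => y ^ 2 - c) (g := (· + a)) hx
    (continuous_add_const a).continuousAt q
  rw [hmul.iteratedDeriv_eq,
    iteratedDeriv_two_sq_sub_mul_add_rpow c a (-q) hx]
  ring

/-- The function `V(X,Y,Z) = (X² − Y² − 3Z²)/(X+Y)^{5/2}` satisfies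
the wave equation `V_XX − V_YY − V_ZZ = 0` at every point with `X + Y > 0`. -/
theorem stmt_4 (X Y Z : ℝ) (h : 0 < X + Y) :
    iteratedDeriv 2 (fun x : ℝ => (x ^ 2 - Y ^ 2 - 3 * Z ^ 2) / (x + Y) ^ ((5 : ℝ) / 2)) X
    - iteratedDeriv 2 (fun y : ℝ => (X ^ 2 - y ^ 2 - 3 * Z ^ 2) / (X + y) ^ ((5 : ℝ) / 2)) Y
    - iteratedDeriv 2 (fun z : ℝ => (X ^ 2 - Y ^ 2 - 3 * z ^ 2) / (X + Y) ^ ((5 : ℝ) / 2)) Z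
    = 0 := by
  have hZ : iteratedDeriv 2 (fun z : ℝ => (X ^ 2 - Y ^ 2 - 3 * z ^ 2) / (X + Y) ^ ((5 : ℝ) / 2)) Z
      = -6 * (X + Y) ^ (-(5 / 2 : ℝ)) := by
    rw [Real.rpow_neg h.le]
    simp only [iteratedDeriv_div_const, iteratedDeriv_const_sub two_pos, iteratedDeriv_neg,
      iteratedDeriv_const_mul_field, iteratedDeriv_pow]
    norm_num
    ring
  have hX := iteratedDeriv_two_sq_sub_div_add_rpow (Y ^ 2 + 3 * Z ^ 2) Y (5 / 2) h
  have hY := iteratedDeriv_two_sq_sub_div_add_rpow (X ^ 2 - 3 * Z ^ 2) X (5 / 2) (add_comm X Y ▸ h)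
  have hV_X : (fun x : ℝ => (x ^ 2 - Y ^ 2 - 3 * Z ^ 2) / (x + Y) ^ ((5 : ℝ) / 2))
      = fun x => (x ^ 2 - (Y ^ 2 + 3 * Z ^ 2)) / (x + Y) ^ ((5 : ℝ) / 2) := by
    simp only [sub_sub]
  have hV_Y : (fun y : ℝ => (X ^ 2 - y ^ 2 - 3 * Z ^ 2) / (X + y) ^ ((5 : ℝ) / 2))
      = fun y => -((y ^ 2 - (X ^ 2 - 3 * Z ^ 2)) / (y + X) ^ ((5 : ℝ) / 2)) := by
    funext y
    rw [add_comm X y]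
    ring
  have hpow : ∀ r : ℝ, (X + Y) ^ r = (X + Y) * (X + Y) ^ (r - 1) := fun r => by
    rw [mul_comm, ← Real.rpow_add_one h.ne', sub_add_cancel]
  rw [hV_X, hX, hV_Y, iteratedDeriv_fun_neg, hY, add_comm Y X, hZ]
  linear_combination 10 * hpow (-(5 / 2))
end

section
/- Fix a natural number m and let V_m : {(X, Y, Z) ∈ ℝ³ : X + Y > 0} → ℝ be defined by V_m(X, Y, Z) = ∂^m_λ (λ²(X − Y) + 2λZ + (X + Y))^{−1/2}|_{λ=0} (the m-th derivative at λ = 0 of the function λ ↦ (λ²(X−Y) + 2λZ + (X+Y))^{−1/2}, which is well defined for λ near 0 when X + Y > 0). Then V_m satisfies the wave equation ∂²V_m/∂X² − ∂²V_m/∂Y² − ∂²V_m/∂Z² = 0 at every point with X + Y > 0. -/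
/-!
For fixed `λ` the base `q = (1 + λ²) X + (1 - λ²) Y + 2 λ Z` is a linear form whose coefficient
vector is null for `dX² - dY² - dZ²`, so `q ^ (-1/2)` solves the wave equation; explicitly
`(1 + λ²)² = (1 - λ²)² + (2λ)²`. The function is smooth on the open set `q > 0`, so by symmetry
of second derivatives the `λ`-derivatives at `λ = 0` commute with the second derivatives in
`X`, `Y`, `Z`, and `V_m` inherits the wave equation.
-/

open Set Filter Topology
open scoped ContDiff

section PartialDeriv

variable {𝕜 F : Type*} [RCLike 𝕜] [NormedAddCommGroup F] [NormedSpace 𝕜 F]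

noncomputable def partialFst (f : 𝕜 × 𝕜 → F) (p : 𝕜 × 𝕜) : F :=
  deriv (fun s => f (s, p.2)) p.1

noncomputable def partialSnd (f : 𝕜 × 𝕜 → F) (p : 𝕜 × 𝕜) : F :=
  deriv (fun y => f (p.1, y)) p.2

theorem partialFst_iterate_apply (f : 𝕜 × 𝕜 → F) (m : ℕ) (s y : 𝕜) :
    (partialFst^[m] f) (s, y) = iteratedDeriv m (fun s => f (s, y)) s := by
  induction m generalizing s with
  | zero => simp
  | succ m ih =>
    rw [Function.iterate_succ_apply', iteratedDeriv_succ]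
    exact congrArg (deriv · s) (funext ih)

theorem partialSnd_iterate_apply (f : 𝕜 × 𝕜 → F) (k : ℕ) (s y : 𝕜) :
    (partialSnd^[k] f) (s, y) = iteratedDeriv k (fun y => f (s, y)) y := by
  induction k generalizing y with
  | zero => simp
  | succ k ih =>
    rw [Function.iterate_succ_apply', iteratedDeriv_succ]
    exact congrArg (deriv · y) (funext ih)

theorem DifferentiableAt.hasDerivAt_fst_slice {G : Type*} [NormedAddCommGroup G]
    [NormedSpace 𝕜 G] {g : 𝕜 × 𝕜 → G} {s y : 𝕜} (hg : DifferentiableAt 𝕜 g (s, y)) :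
    HasDerivAt (fun s => g (s, y)) (fderiv 𝕜 g (s, y) (1, 0)) s :=
  hg.hasFDerivAt.comp_hasDerivAt s ((hasDerivAt_id s).prodMk (hasDerivAt_const s y))

theorem DifferentiableAt.hasDerivAt_snd_slice {G : Type*} [NormedAddCommGroup G]
    [NormedSpace 𝕜 G] {g : 𝕜 × 𝕜 → G} {s y : 𝕜} (hg : DifferentiableAt 𝕜 g (s, y)) :
    HasDerivAt (fun y => g (s, y)) (fderiv 𝕜 g (s, y) (0, 1)) y :=
  hg.hasFDerivAt.comp_hasDerivAt y ((hasDerivAt_const y s).prodMk (hasDerivAt_id y))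

variable {f g : 𝕜 × 𝕜 → F} {U : Set (𝕜 × 𝕜)}

theorem Set.EqOn.partialFst (h : EqOn f g U) (hU : IsOpen U) :
    EqOn (partialFst f) (partialFst g) U := by
  rintro ⟨s, y⟩ hp
  have hslice : (fun s => (s, y)) ⁻¹' U ∈ 𝓝 s :=
    (continuous_id.prodMk continuous_const).continuousAt.preimage_mem_nhds (hU.mem_nhds hp)
  exact EventuallyEq.deriv_eq (mem_of_superset hslice fun _ h' => h h')

theorem Set.EqOn.partialSnd (h : EqOn f g U) (hU : IsOpen U) :
    EqOn (partialSnd f) (partialSnd g) U := by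
  rintro ⟨s, y⟩ hp
  have hslice : (fun y => (s, y)) ⁻¹' U ∈ 𝓝 y :=
    (continuous_const.prodMk continuous_id).continuousAt.preimage_mem_nhds (hU.mem_nhds hp)
  exact EventuallyEq.deriv_eq (mem_of_superset hslice fun _ h' => h h')

theorem ContDiffOn.partialFst_eqOn_fderiv (hf : ContDiffOn 𝕜 ∞ f U) (hU : IsOpen U) :
    EqOn (partialFst f) (fun p => fderiv 𝕜 f p (1, 0)) U := by
  rintro ⟨s, y⟩ hp
  exact ((hf.contDiffAt (hU.mem_nhds hp)).differentiableAt (by simp)).hasDerivAt_fst_slice.deriv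

theorem ContDiffOn.partialSnd_eqOn_fderiv (hf : ContDiffOn 𝕜 ∞ f U) (hU : IsOpen U) :
    EqOn (partialSnd f) (fun p => fderiv 𝕜 f p (0, 1)) U := by
  rintro ⟨s, y⟩ hp
  exact ((hf.contDiffAt (hU.mem_nhds hp)).differentiableAt (by simp)).hasDerivAt_snd_slice.deriv

theorem ContDiffOn.partialFst (hf : ContDiffOn 𝕜 ∞ f U) (hU : IsOpen U) :
    ContDiffOn 𝕜 ∞ (partialFst f) U :=
  ((hf.fderiv_of_isOpen hU (by simp)).clm_apply contDiffOn_const).congr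
    (hf.partialFst_eqOn_fderiv hU)

theorem ContDiffOn.partialSnd (hf : ContDiffOn 𝕜 ∞ f U) (hU : IsOpen U) :
    ContDiffOn 𝕜 ∞ (partialSnd f) U :=
  ((hf.fderiv_of_isOpen hU (by simp)).clm_apply contDiffOn_const).congr
    (hf.partialSnd_eqOn_fderiv hU)

theorem ContDiffOn.partialSnd_partialFst (hf : ContDiffOn 𝕜 ∞ f U) (hU : IsOpen U)
    {p : 𝕜 × 𝕜} (hp : p ∈ U) :
    _root_.partialSnd (_root_.partialFst f) p = _root_.partialFst (_root_.partialSnd f) p := by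
  obtain ⟨s, y⟩ := p
  have hfp : ContDiffAt 𝕜 ∞ f (s, y) := hf.contDiffAt (hU.mem_nhds hp)
  have hd : DifferentiableAt 𝕜 (fderiv 𝕜 f) (s, y) :=
    (hfp.fderiv_right (m := ∞) (by simp)).differentiableAt (by simp)
  rw [(hf.partialFst_eqOn_fderiv hU).partialSnd hU hp,
    (hf.partialSnd_eqOn_fderiv hU).partialFst hU hp, _root_.partialSnd, _root_.partialFst,
    (hd.hasDerivAt_snd_slice.clm_apply (hasDerivAt_const _ _)).deriv,
    (hd.hasDerivAt_fst_slice.clm_apply (hasDerivAt_const _ _)).deriv]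
  simpa using hfp.isSymmSndFDerivAt (by simpa using ENat.LEInfty.out) (0, 1) (1, 0)

theorem ContDiffOn.partialFst_iterate (hf : ContDiffOn 𝕜 ∞ f U) (hU : IsOpen U) (m : ℕ) :
    ContDiffOn 𝕜 ∞ (_root_.partialFst^[m] f) U := by
  induction m with
  | zero => exact hf
  | succ m ih => rw [Function.iterate_succ_apply']; exact ih.partialFst hU

theorem ContDiffOn.partialSnd_iterate (hf : ContDiffOn 𝕜 ∞ f U) (hU : IsOpen U) (k : ℕ) :
    ContDiffOn 𝕜 ∞ (_root_.partialSnd^[k] f) U := by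
  induction k with
  | zero => exact hf
  | succ k ih => rw [Function.iterate_succ_apply']; exact ih.partialSnd hU

theorem ContDiffOn.partialSnd_partialFst_iterate (hf : ContDiffOn 𝕜 ∞ f U) (hU : IsOpen U)
    (m : ℕ) :
    EqOn (_root_.partialSnd (_root_.partialFst^[m] f))
      (_root_.partialFst^[m] (_root_.partialSnd f)) U := by
  induction m with
  | zero => exact fun _ _ => rfl
  | succ m ih =>
    intro p hp
    rw [Function.iterate_succ_apply', Function.iterate_succ_apply',
      (hf.partialFst_iterate hU m).partialSnd_partialFst hU hp]
    exact ih.partialFst hU hp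

theorem ContDiffOn.partialSnd_iterate_partialFst_iterate (hf : ContDiffOn 𝕜 ∞ f U)
    (hU : IsOpen U) (k m : ℕ) :
    EqOn (_root_.partialSnd^[k] (_root_.partialFst^[m] f))
      (_root_.partialFst^[m] (_root_.partialSnd^[k] f)) U := by
  induction k with
  | zero => exact fun _ _ => rfl
  | succ k ih =>
    intro p hp
    rw [Function.iterate_succ_apply', Function.iterate_succ_apply']
    exact (ih.partialSnd hU hp).trans
      ((hf.partialSnd_iterate hU k).partialSnd_partialFst_iterate hU m hp)

theorem ContDiffOn.iteratedDeriv_iteratedDeriv_comm (hf : ContDiffOn 𝕜 ∞ f U) (hU : IsOpen U)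
    {t x : 𝕜} (ht : (t, x) ∈ U) (k m : ℕ) :
    iteratedDeriv k (fun y => iteratedDeriv m (fun s => f (s, y)) t) x
      = iteratedDeriv m (fun s => iteratedDeriv k (fun y => f (s, y)) x) t := by
  simp only [← partialFst_iterate_apply, ← partialSnd_iterate_apply]
  exact hf.partialSnd_iterate_partialFst_iterate hU k m ht

theorem ContDiffOn.contDiffAt_iteratedDeriv_snd_slice (hf : ContDiffOn 𝕜 ∞ f U) (hU : IsOpen U)
    {t x : 𝕜} (ht : (t, x) ∈ U) (k : ℕ) :
    ContDiffAt 𝕜 ∞ (fun s => iteratedDeriv k (fun y => f (s, y)) x) t := by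
  simp only [← partialSnd_iterate_apply]
  exact ((hf.partialSnd_iterate hU k).contDiffAt (hU.mem_nhds ht)).comp t
    (contDiffAt_id.prodMk contDiffAt_const)

end PartialDeriv

theorem iteratedDeriv_two_rpow_affine {a x₀ c r : ℝ} (hc : 0 < c) :
    iteratedDeriv 2 (fun x => (a * (x - x₀) + c) ^ r) x₀
      = r * (r - 1) * a ^ 2 * c ^ (r - 2) := by
  have hderiv : ∀ {p x : ℝ}, 0 < a * (x - x₀) + c →
      HasDerivAt (fun x => (a * (x - x₀) + c) ^ p) (p * a * (a * (x - x₀) + c) ^ (p - 1)) x := by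
    intro p x hx
    refine ((((hasDerivAt_id x).sub_const x₀).const_mul a).add_const c |>.rpow_const
      (Or.inl hx.ne')).congr_deriv ?_
    simp only [id]
    ring
  have hpos : ∀ᶠ x in 𝓝 x₀, 0 < a * (x - x₀) + c :=
    continuousAt_const.eventually_lt (by fun_prop) (by simpa using hc)
  have hderiv_eq : deriv (fun x => (a * (x - x₀) + c) ^ r)
      =ᶠ[𝓝 x₀] fun x => r * a * (a * (x - x₀) + c) ^ (r - 1) :=
    hpos.mono fun x hx => (hderiv hx).deriv
  rw [iteratedDeriv_succ, iteratedDeriv_one, hderiv_eq.deriv_eq,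
    ((hderiv (p := r - 1) (by simpa using hc)).const_mul (r * a)).deriv]
  simp only [sub_self, mul_zero, zero_add]
  rw [sub_sub, show (1 : ℝ) + 1 = 2 by norm_num]
  ring

theorem iteratedDeriv_two_rpow_nullForm {X Y Z l : ℝ}
    (hl : 0 < l ^ 2 * (X - Y) + 2 * l * Z + (X + Y)) (r : ℝ) :
    iteratedDeriv 2 (fun x => (l ^ 2 * (x - Y) + 2 * l * Z + (x + Y)) ^ r) X
      = iteratedDeriv 2 (fun y => (l ^ 2 * (X - y) + 2 * l * Z + (X + y)) ^ r) Y
        + iteratedDeriv 2 (fun z => (l ^ 2 * (X - Y) + 2 * l * z + (X + Y)) ^ r) Z := by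
  generalize hc : l ^ 2 * (X - Y) + 2 * l * Z + (X + Y) = c at hl
  have eX : (fun x => (l ^ 2 * (x - Y) + 2 * l * Z + (x + Y)) ^ r)
      = fun x => ((1 + l ^ 2) * (x - X) + c) ^ r := by funext x; rw [← hc]; ring_nf
  have eY : (fun y => (l ^ 2 * (X - y) + 2 * l * Z + (X + y)) ^ r)
      = fun y => ((1 - l ^ 2) * (y - Y) + c) ^ r := by funext y; rw [← hc]; ring_nf
  have eZ : (fun z => (l ^ 2 * (X - Y) + 2 * l * z + (X + Y)) ^ r)
      = fun z => ((2 * l) * (z - Z) + c) ^ r := by funext z; rw [← hc]; ring_nf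
  rw [eX, eY, eZ, iteratedDeriv_two_rpow_affine hl, iteratedDeriv_two_rpow_affine hl,
    iteratedDeriv_two_rpow_affine hl]
  ring

theorem ContDiff.iteratedDeriv_iteratedDeriv_rpow_comm {g : ℝ × ℝ → ℝ} (hg : ContDiff ℝ ∞ g)
    {t x : ℝ} (h : 0 < g (t, x)) (r : ℝ) (k m : ℕ) :
    iteratedDeriv k (fun y => iteratedDeriv m (fun s => g (s, y) ^ r) t) x
      = iteratedDeriv m (fun s => iteratedDeriv k (fun y => g (s, y) ^ r) x) t :=
  (hg.contDiffOn.rpow_const_of_ne fun _ hp => ne_of_gt hp).iteratedDeriv_iteratedDeriv_comm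
    (isOpen_lt continuous_const hg.continuous) (U := {p | 0 < g p}) h k m

theorem ContDiff.contDiffAt_iteratedDeriv_rpow_snd_slice {g : ℝ × ℝ → ℝ} (hg : ContDiff ℝ ∞ g)
    {t x : ℝ} (h : 0 < g (t, x)) (r : ℝ) (k : ℕ) :
    ContDiffAt ℝ ∞ (fun s => iteratedDeriv k (fun y => g (s, y) ^ r) x) t :=
  (hg.contDiffOn.rpow_const_of_ne fun _ hp => ne_of_gt hp).contDiffAt_iteratedDeriv_snd_slice
    (isOpen_lt continuous_const hg.continuous) (U := {p | 0 < g p}) h k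

/-- For each natural number `m`, the function
`V_m(X,Y,Z) = ∂^m_λ (λ²(X−Y) + 2λZ + (X+Y))^{−1/2}|_{λ=0}` satisfies the wave
equation `∂²V_m/∂X² − ∂²V_m/∂Y² − ∂²V_m/∂Z² = 0` at every point with `X + Y > 0`. -/
theorem stmt_10 (m : ℕ) (X Y Z : ℝ) (h : 0 < X + Y) :
    iteratedDeriv 2 (fun x : ℝ =>
        iteratedDeriv m
          (fun l : ℝ => (l ^ 2 * (x - Y) + 2 * l * Z + (x + Y)) ^ (-(1 : ℝ) / 2)) 0) X
    - iteratedDeriv 2 (fun y : ℝ =>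
        iteratedDeriv m
          (fun l : ℝ => (l ^ 2 * (X - y) + 2 * l * Z + (X + y)) ^ (-(1 : ℝ) / 2)) 0) Y
    - iteratedDeriv 2 (fun z : ℝ =>
        iteratedDeriv m
          (fun l : ℝ => (l ^ 2 * (X - Y) + 2 * l * z + (X + Y)) ^ (-(1 : ℝ) / 2)) 0) Z
    = 0 := by
  have smooth_X : ContDiff ℝ ∞ fun p : ℝ × ℝ => p.1 ^ 2 * (p.2 - Y) + 2 * p.1 * Z + (p.2 + Y) := by
    fun_prop
  have smooth_Y : ContDiff ℝ ∞ fun p : ℝ × ℝ => p.1 ^ 2 * (X - p.2) + 2 * p.1 * Z + (X + p.2) := by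
    fun_prop
  have smooth_Z : ContDiff ℝ ∞ fun p : ℝ × ℝ => p.1 ^ 2 * (X - Y) + 2 * p.1 * p.2 + (X + Y) := by
    fun_prop
  have h0 : 0 < (0 : ℝ) ^ 2 * (X - Y) + 2 * 0 * Z + (X + Y) := by simpa using h
  have hpos : ∀ᶠ l in 𝓝 (0 : ℝ), 0 < l ^ 2 * (X - Y) + 2 * l * Z + (X + Y) :=
    continuousAt_const.eventually_lt (by fun_prop) h0
  set r : ℝ := -(1 : ℝ) / 2
  have hsum : (fun l => iteratedDeriv 2 (fun x => (l ^ 2 * (x - Y) + 2 * l * Z + (x + Y)) ^ r) X)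
      =ᶠ[𝓝 0] (fun l => iteratedDeriv 2 (fun y => (l ^ 2 * (X - y) + 2 * l * Z + (X + y)) ^ r) Y)
        + (fun l => iteratedDeriv 2 (fun z => (l ^ 2 * (X - Y) + 2 * l * z + (X + Y)) ^ r) Z) :=
    hpos.mono fun l hl => iteratedDeriv_two_rpow_nullForm hl r
  rw [smooth_X.iteratedDeriv_iteratedDeriv_rpow_comm h0,
    smooth_Y.iteratedDeriv_iteratedDeriv_rpow_comm h0,
    smooth_Z.iteratedDeriv_iteratedDeriv_rpow_comm h0, (hsum.iteratedDeriv m).eq_of_nhds,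
    iteratedDeriv_add
      ((smooth_Y.contDiffAt_iteratedDeriv_rpow_snd_slice h0 r 2).of_le (by exact_mod_cast le_top))
      ((smooth_Z.contDiffAt_iteratedDeriv_rpow_snd_slice h0 r 2).of_le (by exact_mod_cast le_top))]
  ring
end

section
/- Let k and i be integers with 0 ≤ i ≤ k and k ≥ 2, and let α be a nonzero complex number. For every nonzero complex number λ the matrix identity holds: [[α, 0], [λ^{2−i−k}, α⁻¹]] · diag(λ^{i−2}, λ^{−i}) · [[α⁻¹λ^{k−i}, 1], [−1, 0]] = [[λ^{k−2}, αλ^{i−2}], [0, λ^{−k}]]. Moreover the left factor has entries that are polynomials in λ⁻¹ and determinant 1, and the right factor has entries that are polynomials in λ and determinant 1. -/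
/-- For integers `0 ≤ i ≤ k` with `k ≥ 2`, nonzero `α : ℂ` and
nonzero `λ : ℂ`, the matrix identity
`[[α, 0], [λ^{2−i−k}, α⁻¹]] · diag(λ^{i−2}, λ^{−i}) · [[α⁻¹λ^{k−i}, 1], [−1, 0]]
  = [[λ^{k−2}, αλ^{i−2}], [0, λ^{−k}]]`
holds, and the two outer factors have determinant `1`. -/
theorem stmt_11 (k i : ℤ) (h0 : 0 ≤ i) (hik : i ≤ k) (hk : 2 ≤ k)
    (α : ℂ) (hα : α ≠ 0) (l : ℂ) (hl : l ≠ 0) :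
    (!![α, 0; l ^ (2 - i - k), α⁻¹] * !![l ^ (i - 2), 0; 0, l ^ (-i)] *
        !![α⁻¹ * l ^ (k - i), 1; -1, 0]
      = !![l ^ (k - 2), α * l ^ (i - 2); 0, l ^ (-k)]) ∧
    Matrix.det !![α, 0; l ^ (2 - i - k), α⁻¹] = 1 ∧
    Matrix.det !![α⁻¹ * l ^ (k - i), 1; -1, 0] = 1 := by
  have key : ∀ m n p : ℤ, m + n = p → l ^ m * l ^ n = l ^ p := fun m n p h => by
    rw [← zpow_add₀ hl, h]
  refine ⟨?_, ?_, ?_⟩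
  · ext a b
    fin_cases a <;> fin_cases b <;> simp [Matrix.mul_apply, Fin.sum_univ_two]
    · calc α * l ^ (i - 2) * (α⁻¹ * l ^ (k - i))
          = α * α⁻¹ * (l ^ (i - 2) * l ^ (k - i)) := by ring
        _ = l ^ (k - 2) := by
            rw [mul_inv_cancel₀ hα, one_mul, key _ _ _ (by ring : (i-2)+(k-i) = k-2)]
    · calc l ^ (2 - i - k) * l ^ (i - 2) * (α⁻¹ * l ^ (k - i)) + -(α⁻¹ * (l ^ i)⁻¹)
          = α⁻¹ * (l ^ (2 - i - k) * l ^ (i - 2) * l ^ (k - i)) - α⁻¹ * (l ^ i)⁻¹ := by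
            ring
        _ = 0 := by
            rw [key _ _ _ (by ring : (2-i-k)+(i-2) = -i-(k-i)),
              key _ _ _ (by ring : (-i-(k-i))+(k-i) = -i), zpow_neg, sub_self]
    · rw [key _ _ _ (by ring : (2-i-k)+(i-2) = -k), zpow_neg]
  · simp [Matrix.det_fin_two_of, mul_inv_cancel₀ hα]
  · simp [Matrix.det_fin_two_of]
end

section
/- Let U ⊆ ℂ⁴ be open with coordinates (t, s, u, v) such that t³ ≠ s³ on U, and let R : U → ℂ be holomorphic with R(p) ≠ 0 and R(p)² = −1 − (vt − us)/(3(t³ − s³)) for all p ∈ U. Define Ω : U → ℂ by Ω = −2i(t³ − s³)R³. Then Ω satisfies the first heavenly equation (∂²Ω/∂t∂s)(∂²Ω/∂u∂v) − (∂²Ω/∂t∂v)(∂²Ω/∂u∂s) = 1 on U. -/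
/-!
With `δ = t³ - s³`, the relation defining `R` reads `3δR² + 3δ + (vt - us) = 0` once denominators
are cleared. Implicit differentiation of it expresses the first partials of `R` rationally in
`(t, s, u, v, R)`, e.g. `R_t = -(v + 9t²(1 + R²)) / (6Rδ)` and `R_u = s / (6Rδ)`. Substituting them
into `Ω = -2iδR³` gives the short first partials `Ω_v = itR` and `Ω_s = -iR(u + 9s² + 3s²R²)`,
whose derivatives in `t` and `u` involve only `R_t` and `R_u`. In `Ω_{ts}Ω_{uv} - Ω_{tv}Ω_{us}` the
terms in `R_t R_u` cancel, and with `A = u + 9s²(1 + R²)`, `B = v + 9t²(1 + R²)` what remains is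
`-R² - (sA - tB) / (6δ)`, which the relation turns into `1`.
-/

open Filter Topology Complex

theorem DifferentiableAt.smul_fderiv_eq_of_eventually_mul_sq_add_eq_zero {𝕜 E : Type*}
    [NontriviallyNormedField 𝕜] [NormedAddCommGroup E] [NormedSpace 𝕜 E]
    {f a b : E → 𝕜} {a' b' : E →L[𝕜] 𝕜} {p : E}
    (hf : DifferentiableAt 𝕜 f p) (ha : HasFDerivAt a a' p) (hb : HasFDerivAt b b' p)
    (h : ∀ᶠ q in 𝓝 p, a q * f q ^ 2 + b q = 0) :
    (2 * a p * f p) • fderiv 𝕜 f p = -(f p ^ 2 • a' + b') := by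
  have h0 : HasFDerivAt (fun q => a q * f q ^ 2 + b q) (0 : E →L[𝕜] 𝕜) p :=
    (hasFDerivAt_const 0 p).congr_of_eventuallyEq h
  have hG := (ha.mul (hf.hasFDerivAt.pow 2)).add hb |>.unique h0
  ext w
  have hw := congrArg (· w) hG
  simp only [add_apply, smul_apply, smul_eq_mul, zero_apply, neg_apply, pow_one,
    Nat.add_one_sub_one, nsmul_eq_mul, Nat.cast_ofNat] at hw ⊢
  linear_combination hw

/-- `R` is the square root that the Legendre transform of the `O(4)` twistor patching produces. -/
structure IsLegendreRoot (U : Set (ℂ × ℂ × ℂ × ℂ)) (R : ℂ × ℂ × ℂ × ℂ → ℂ) : Prop where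
  isOpen : IsOpen U
  cube_ne : ∀ p ∈ U, p.1 ^ 3 ≠ p.2.1 ^ 3
  differentiableOn : DifferentiableOn ℂ R U
  ne_zero : ∀ p ∈ U, R p ≠ 0
  sq_eq : ∀ p ∈ U,
    R p ^ 2 = -1 - (p.2.2.2 * p.1 - p.2.2.1 * p.2.1) / (3 * (p.1 ^ 3 - p.2.1 ^ 3))

noncomputable def kahlerPotential (R : ℂ × ℂ × ℂ × ℂ → ℂ) (p : ℂ × ℂ × ℂ × ℂ) : ℂ :=
  -2 * I * (p.1 ^ 3 - p.2.1 ^ 3) * R p ^ 3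

namespace IsLegendreRoot

variable {U : Set (ℂ × ℂ × ℂ × ℂ)} {R : ℂ × ℂ × ℂ × ℂ → ℂ} {t s u v : ℂ}

theorem sub_ne_zero (h : IsLegendreRoot U R) (hp : (t, s, u, v) ∈ U) : t ^ 3 - s ^ 3 ≠ 0 :=
  _root_.sub_ne_zero.mpr (h.cube_ne (t, s, u, v) hp)

theorem mul_sq_add_eq_zero (h : IsLegendreRoot U R) (hp : (t, s, u, v) ∈ U) :
    3 * (t ^ 3 - s ^ 3) * R (t, s, u, v) ^ 2 + (3 * (t ^ 3 - s ^ 3) + (v * t - u * s)) = 0 := by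
  have hδ := h.sub_ne_zero hp
  rw [h.sq_eq _ hp]
  field_simp
  ring

theorem differentiableAt (h : IsLegendreRoot U R) (hp : (t, s, u, v) ∈ U) :
    DifferentiableAt ℂ R (t, s, u, v) :=
  h.differentiableOn.differentiableAt (h.isOpen.mem_nhds hp)

theorem fderiv_apply (h : IsLegendreRoot U R) (hp : (t, s, u, v) ∈ U) (w : ℂ × ℂ × ℂ × ℂ) :
    fderiv ℂ R (t, s, u, v) w = (-(v + 9 * t ^ 2 * (1 + R (t, s, u, v) ^ 2)) * w.1
      + (u + 9 * s ^ 2 * (1 + R (t, s, u, v) ^ 2)) * w.2.1 + s * w.2.2.1 - t * w.2.2.2)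
        / (6 * R (t, s, u, v) * (t ^ 3 - s ^ 3)) := by
  have hid := hasFDerivAt_id (𝕜 := ℂ) (t, s, u, v)
  have ha : HasFDerivAt (fun q : ℂ × ℂ × ℂ × ℂ => 3 * (q.1 ^ 3 - q.2.1 ^ 3)) _ (t, s, u, v) :=
    ((hid.fst.pow 3).sub (hid.snd.fst.pow 3)).const_mul 3
  have hb : HasFDerivAt (fun q : ℂ × ℂ × ℂ × ℂ =>
      3 * (q.1 ^ 3 - q.2.1 ^ 3) + (q.2.2.2 * q.1 - q.2.2.1 * q.2.1)) _ (t, s, u, v) :=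
    ha.add ((hid.snd.snd.snd.mul hid.fst).sub (hid.snd.snd.fst.mul hid.snd.fst))
  have hrel : ∀ᶠ q in 𝓝 (t, s, u, v), 3 * (q.1 ^ 3 - q.2.1 ^ 3) * R q ^ 2
      + (3 * (q.1 ^ 3 - q.2.1 ^ 3) + (q.2.2.2 * q.1 - q.2.2.1 * q.2.1)) = 0 :=
    eventually_of_mem (h.isOpen.mem_nhds hp) fun q hq => h.mul_sq_add_eq_zero hq
  have hw := congrArg (· w)
    ((h.differentiableAt hp).smul_fderiv_eq_of_eventually_mul_sq_add_eq_zero ha hb hrel)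
  simp only [smul_apply, smul_eq_mul, id_eq, Nat.add_one_sub_one, nsmul_eq_mul, Nat.cast_ofNat,
    ContinuousLinearMap.comp_id, neg_add_rev, neg_sub, add_apply, sub_apply,
    ContinuousLinearMap.comp_apply, ContinuousLinearMap.coe_snd', ContinuousLinearMap.coe_fst',
    neg_apply] at hw
  have hδ := h.sub_ne_zero hp
  have hr := h.ne_zero _ hp
  field_simp
  linear_combination hw

theorem hasDerivAt_t (h : IsLegendreRoot U R) (hp : (t, s, u, v) ∈ U) :
    HasDerivAt (fun t' => R (t', s, u, v))
      (-(v + 9 * t ^ 2 * (1 + R (t, s, u, v) ^ 2)) / (6 * R (t, s, u, v) * (t ^ 3 - s ^ 3))) t :=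
  ((h.differentiableAt hp).hasFDerivAt.comp_hasDerivAt t ((hasDerivAt_id t).prodMk
    (hasDerivAt_const t (s, u, v)))).congr_deriv (by simp [h.fderiv_apply hp])

theorem hasDerivAt_s (h : IsLegendreRoot U R) (hp : (t, s, u, v) ∈ U) :
    HasDerivAt (fun s' => R (t, s', u, v))
      ((u + 9 * s ^ 2 * (1 + R (t, s, u, v) ^ 2)) / (6 * R (t, s, u, v) * (t ^ 3 - s ^ 3))) s :=
  ((h.differentiableAt hp).hasFDerivAt.comp_hasDerivAt s ((hasDerivAt_const s t).prodMk
    ((hasDerivAt_id s).prodMk (hasDerivAt_const s (u, v))))).congr_deriv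
    (by simp [h.fderiv_apply hp])

theorem hasDerivAt_u (h : IsLegendreRoot U R) (hp : (t, s, u, v) ∈ U) :
    HasDerivAt (fun u' => R (t, s, u', v)) (s / (6 * R (t, s, u, v) * (t ^ 3 - s ^ 3))) u :=
  ((h.differentiableAt hp).hasFDerivAt.comp_hasDerivAt u ((hasDerivAt_const u t).prodMk
    ((hasDerivAt_const u s).prodMk ((hasDerivAt_id u).prodMk (hasDerivAt_const u v))))).congr_deriv
    (by simp [h.fderiv_apply hp])

theorem hasDerivAt_v (h : IsLegendreRoot U R) (hp : (t, s, u, v) ∈ U) :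
    HasDerivAt (fun v' => R (t, s, u, v')) (-t / (6 * R (t, s, u, v) * (t ^ 3 - s ^ 3))) v :=
  ((h.differentiableAt hp).hasFDerivAt.comp_hasDerivAt v ((hasDerivAt_const v t).prodMk
    ((hasDerivAt_const v s).prodMk ((hasDerivAt_const v u).prodMk (hasDerivAt_id v))))).congr_deriv
    (by simp [h.fderiv_apply hp])

theorem deriv_kahlerPotential_s (h : IsLegendreRoot U R) (hp : (t, s, u, v) ∈ U) :
    deriv (fun s' => kahlerPotential R (t, s', u, v)) s
      = -I * R (t, s, u, v) * (u + 9 * s ^ 2 + 3 * s ^ 2 * R (t, s, u, v) ^ 2) := by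
  have hδ := h.sub_ne_zero hp
  have hr := h.ne_zero _ hp
  have hc : HasDerivAt (fun s' : ℂ => -2 * I * (t ^ 3 - s' ^ 3)) (-2 * I * -(3 * s ^ 2)) s := by
    simpa using ((hasDerivAt_pow 3 s).const_sub (t ^ 3)).const_mul (-2 * I)
  refine (hc.mul ((h.hasDerivAt_s hp).pow 3)).deriv.trans ?_
  simp only [Pi.pow_apply]
  field_simp
  ring

theorem deriv_kahlerPotential_v (h : IsLegendreRoot U R) (hp : (t, s, u, v) ∈ U) :
    deriv (fun v' => kahlerPotential R (t, s, u, v')) v = I * t * R (t, s, u, v) := by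
  have hδ := h.sub_ne_zero hp
  have hr := h.ne_zero _ hp
  refine (((h.hasDerivAt_v hp).pow 3).const_mul (-2 * I * (t ^ 3 - s ^ 3))).deriv.trans ?_
  field_simp
  ring

theorem eventually_mem_t (h : IsLegendreRoot U R) (hp : (t, s, u, v) ∈ U) :
    ∀ᶠ t' in 𝓝 t, (t', s, u, v) ∈ U :=
  (by fun_prop : Continuous fun t' : ℂ => (t', s, u, v)).continuousAt.eventually_mem
    (h.isOpen.mem_nhds hp)

theorem eventually_mem_u (h : IsLegendreRoot U R) (hp : (t, s, u, v) ∈ U) :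
    ∀ᶠ u' in 𝓝 u, (t, s, u', v) ∈ U :=
  (by fun_prop : Continuous fun u' : ℂ => (t, s, u', v)).continuousAt.eventually_mem
    (h.isOpen.mem_nhds hp)

variable {r' : ℂ}

theorem deriv_deriv_kahlerPotential_ts (h : IsLegendreRoot U R) (hp : (t, s, u, v) ∈ U)
    (hr' : HasDerivAt (fun t' => R (t', s, u, v)) r' t) :
    deriv (fun t' => deriv (fun s' => kahlerPotential R (t', s', u, v)) s) t
      = -I * (u + 9 * s ^ 2 * (1 + R (t, s, u, v) ^ 2)) * r' := by
  have hev : (fun t' => deriv (fun s' => kahlerPotential R (t', s', u, v)) s) =ᶠ[𝓝 t]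
      fun t' => -I * R (t', s, u, v) * (u + 9 * s ^ 2 + 3 * s ^ 2 * R (t', s, u, v) ^ 2) :=
    (h.eventually_mem_t hp).mono fun t' ht' => h.deriv_kahlerPotential_s ht'
  rw [hev.deriv_eq]
  refine ((hr'.const_mul (-I)).mul (((hr'.pow 2).const_mul (3 * s ^ 2)).const_add
    (u + 9 * s ^ 2))).deriv.trans ?_
  simp only [Pi.pow_apply]
  ring

theorem deriv_deriv_kahlerPotential_us (h : IsLegendreRoot U R) (hp : (t, s, u, v) ∈ U)
    (hr' : HasDerivAt (fun u' => R (t, s, u', v)) r' u) :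
    deriv (fun u' => deriv (fun s' => kahlerPotential R (t, s', u', v)) s) u
      = -I * (R (t, s, u, v) + (u + 9 * s ^ 2 * (1 + R (t, s, u, v) ^ 2)) * r') := by
  have hev : (fun u' => deriv (fun s' => kahlerPotential R (t, s', u', v)) s) =ᶠ[𝓝 u]
      fun u' => -I * R (t, s, u', v) * (u' + 9 * s ^ 2 + 3 * s ^ 2 * R (t, s, u', v) ^ 2) :=
    (h.eventually_mem_u hp).mono fun u' hu' => h.deriv_kahlerPotential_s hu'
  rw [hev.deriv_eq]
  refine ((hr'.const_mul (-I)).mul (((hasDerivAt_id' u).add_const (9 * s ^ 2)).add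
    ((hr'.pow 2).const_mul (3 * s ^ 2)))).deriv.trans ?_
  simp only [Pi.pow_apply, Pi.add_apply]
  ring

theorem deriv_deriv_kahlerPotential_tv (h : IsLegendreRoot U R) (hp : (t, s, u, v) ∈ U)
    (hr' : HasDerivAt (fun t' => R (t', s, u, v)) r' t) :
    deriv (fun t' => deriv (fun v' => kahlerPotential R (t', s, u, v')) v) t
      = I * (R (t, s, u, v) + t * r') := by
  have hev : (fun t' => deriv (fun v' => kahlerPotential R (t', s, u, v')) v) =ᶠ[𝓝 t]
      fun t' => I * t' * R (t', s, u, v) :=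
    (h.eventually_mem_t hp).mono fun t' ht' => h.deriv_kahlerPotential_v ht'
  rw [hev.deriv_eq]
  refine (((hasDerivAt_id' t).const_mul I).mul hr').deriv.trans ?_
  ring

theorem deriv_deriv_kahlerPotential_uv (h : IsLegendreRoot U R) (hp : (t, s, u, v) ∈ U)
    (hr' : HasDerivAt (fun u' => R (t, s, u', v)) r' u) :
    deriv (fun u' => deriv (fun v' => kahlerPotential R (t, s, u', v')) v) u = I * t * r' := by
  have hev : (fun u' => deriv (fun v' => kahlerPotential R (t, s, u', v')) v) =ᶠ[𝓝 u]
      fun u' => I * t * R (t, s, u', v) :=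
    (h.eventually_mem_u hp).mono fun u' hu' => h.deriv_kahlerPotential_v hu'
  rw [hev.deriv_eq, (hr'.const_mul (I * t)).deriv]

end IsLegendreRoot

theorem first_heavenly_identity {t s u v r rt ru : ℂ} (hδ : t ^ 3 - s ^ 3 ≠ 0)
    (hrel : 3 * (t ^ 3 - s ^ 3) * r ^ 2 + (3 * (t ^ 3 - s ^ 3) + (v * t - u * s)) = 0)
    (hrt : 6 * r * (t ^ 3 - s ^ 3) * rt = -(v + 9 * t ^ 2 * (1 + r ^ 2)))
    (hru : 6 * r * (t ^ 3 - s ^ 3) * ru = s) :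
    -I * (u + 9 * s ^ 2 * (1 + r ^ 2)) * rt * (I * t * ru)
      - I * (r + t * rt) * (-I * (r + (u + 9 * s ^ 2 * (1 + r ^ 2)) * ru)) = 1 := by
  refine mul_left_cancel₀ (mul_ne_zero (by norm_num : (6 : ℂ) ≠ 0) hδ) ?_
  linear_combination hrel - (u + 9 * s ^ 2 * (1 + r ^ 2)) * hru - t * hrt
    - 6 * (t ^ 3 - s ^ 3) * ((u + 9 * s ^ 2 * (1 + r ^ 2)) * t * rt * ru
      - (r + t * rt) * (r + (u + 9 * s ^ 2 * (1 + r ^ 2)) * ru)) * I_sq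

/-- Let `U ⊆ ℂ⁴` be open with coordinates `(t, s, u, v)` such that
`t³ ≠ s³` on `U`, and let `R` be holomorphic on `U`, nonvanishing, with
`R² = −1 − (vt − us)/(3(t³ − s³))` on `U`. Then `Ω = −2i(t³ − s³)R³` satisfies
Plebański's first heavenly equation `Ω_{ts}Ω_{uv} − Ω_{tv}Ω_{us} = 1` on `U`. -/
theorem stmt_15 (U : Set (ℂ × ℂ × ℂ × ℂ)) (hU : IsOpen U)
    (hts : ∀ p ∈ U, p.1 ^ 3 ≠ p.2.1 ^ 3)
    (R : ℂ × ℂ × ℂ × ℂ → ℂ) (hR : DifferentiableOn ℂ R U)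
    (hR0 : ∀ p ∈ U, R p ≠ 0)
    (hRsq : ∀ p ∈ U, (R p) ^ 2
      = -1 - (p.2.2.2 * p.1 - p.2.2.1 * p.2.1) / (3 * (p.1 ^ 3 - p.2.1 ^ 3)))
    (Ω : ℂ × ℂ × ℂ × ℂ → ℂ)
    (hΩ : ∀ p, Ω p = -2 * Complex.I * (p.1 ^ 3 - p.2.1 ^ 3) * (R p) ^ 3) :
    ∀ t s u v : ℂ, (t, s, u, v) ∈ U →
      (deriv (fun t' => deriv (fun s' => Ω (t', s', u, v)) s) t) *
        (deriv (fun u' => deriv (fun v' => Ω (t, s, u', v')) v) u) -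
      (deriv (fun t' => deriv (fun v' => Ω (t', s, u, v')) v) t) *
        (deriv (fun u' => deriv (fun s' => Ω (t, s', u', v)) s) u) = 1 := by
  obtain rfl : Ω = kahlerPotential R := funext hΩ
  have h : IsLegendreRoot U R := ⟨hU, hts, hR, hR0, hRsq⟩
  intro t s u v hp
  have hδ := h.sub_ne_zero hp
  have hX : 6 * R (t, s, u, v) * (t ^ 3 - s ^ 3) ≠ 0 := mul_ne_zero (by simp [h.ne_zero _ hp]) hδ
  simp only [h.deriv_deriv_kahlerPotential_ts hp (h.hasDerivAt_t hp),
    h.deriv_deriv_kahlerPotential_uv hp (h.hasDerivAt_u hp),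
    h.deriv_deriv_kahlerPotential_tv hp (h.hasDerivAt_t hp),
    h.deriv_deriv_kahlerPotential_us hp (h.hasDerivAt_u hp)]
  exact first_heavenly_identity hδ (h.mul_sq_add_eq_zero hp) (mul_div_cancel₀ _ hX)
    (mul_div_cancel₀ _ hX)
end
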